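/- arXiv:0704.0074 — 10 statements merged into one kernel-verified Lean document; each statement's English description precedes it below -/
import Mathlib

section
/- Let T be a ring and W a left T-module. W is locally projective (in the sense of Zimmermann-Huisgen) if and only if for every finite subset {w_1,...,w_k} ⊆ W there exist finitely many pairs (f_i, w̃_i) in Hom_T(W,T) × W such that w_j = Σ_i f_i(w_j)·w̃_i for all j = 1,...,k. -/
/-!
Apply local projectivity to the canonical free presentation `W →₀ T → W`, `e_v ↦ v`: on a
finitely generated submodule containing `w_1, …, w_k` the identity lifts to some
`φ : W → W →₀ T`, and the coordinates `v ↦ φ(·)(v)` for `v` in the finitely many supports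
of the `φ(w_j)` give the pairs `(f_i, w̃_i)`. Conversely, given such pairs for generators of
`F`, lift each `g(w̃_i)` to some `l_i ∈ L`; then `g' = Σ_i f_i(·) • l_i` works on the
generators, hence on all of `F`.
-/

/-- `W` is a locally projective left `T`-module (Zimmermann-Huisgen): for every
diagram with exact row `L → N → 0`, every finitely generated submodule `F ⊆ W`
and every `T`-linear `g : W → N` there is a `T`-linear `g' : W → L` with
`g ∘ ι = π ∘ g' ∘ ι` on `F`. -/
def LocallyProjective (T W : Type) [Ring T] [AddCommGroup W] [Module T W] : Prop :=
  ∀ (L N : Type) [AddCommGroup L] [Module T L] [AddCommGroup N] [Module T N]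
    (π : L →ₗ[T] N), Function.Surjective π →
      ∀ F : Submodule T W, F.FG →
        ∀ g : W →ₗ[T] N, ∃ g' : W →ₗ[T] L, ∀ x ∈ F, g x = π (g' x)

section DualPairs

variable {T W : Type*} [Ring T] [AddCommGroup W] [Module T W]

theorem exists_fin_dualPairs_of_linearCombination_eq {ι : Type*} [Fintype ι] (w : ι → W)
    (φ : W →ₗ[T] W →₀ T) (hφ : ∀ j, Finsupp.linearCombination T id (φ (w j)) = w j) :
    ∃ (n : ℕ) (f : Fin n → W →ₗ[T] T) (wt : Fin n → W), ∀ j, w j = ∑ i, f i (w j) • wt i := by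
  classical
  let S := Finset.univ.biUnion fun j => (φ (w j)).support
  let e : Fin S.card ≃ S := S.equivFin.symm
  refine ⟨S.card, fun i => Finsupp.lapply (e i : W) ∘ₗ φ, fun i => e i, fun j => ?_⟩
  have hsupp : (φ (w j)).support ⊆ S :=
    Finset.subset_biUnion_of_mem (fun j => (φ (w j)).support) (Finset.mem_univ j)
  calc w j = (φ (w j)).sum fun v a => a • v :=
      (hφ j).symm.trans (Finsupp.linearCombination_apply T _)
    _ = ∑ v ∈ S, φ (w j) v • v :=
      Finsupp.sum_of_support_subset _ hsupp _ fun _ _ => zero_smul T _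
    _ = ∑ i, φ (w j) (e i) • (e i : W) := by rw [← Finset.sum_coe_sort, ← e.sum_comp]

theorem exists_lift_eqOn_span_of_eq_sum_smul {ι L N : Type*} [Fintype ι] [AddCommGroup L]
    [Module T L] [AddCommGroup N] [Module T N] {π : L →ₗ[T] N} (hπ : Function.Surjective π)
    (g : W →ₗ[T] N) {s : Set W} (f : ι → W →ₗ[T] T) (wt : ι → W)
    (hs : ∀ x ∈ s, x = ∑ i, f i x • wt i) :
    ∃ g' : W →ₗ[T] L, ∀ x ∈ Submodule.span T s, g x = π (g' x) := by
  choose l hl using fun i => hπ (g (wt i))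
  let g' := ∑ i, LinearMap.toSpanSingleton T L (l i) ∘ₗ f i
  refine ⟨g', fun x hx => LinearMap.eqOn_span (g := π ∘ₗ g') (fun y hy => ?_) hx⟩
  conv_lhs => rw [hs y hy]
  simp [g', hl]

end DualPairs

theorem LocallyProjective.exists_linearCombination_eq {T W : Type} [Ring T] [AddCommGroup W]
    [Module T W] (h : LocallyProjective T W) {F : Submodule T W} (hF : F.FG) :
    ∃ φ : W →ₗ[T] W →₀ T, ∀ x ∈ F, Finsupp.linearCombination T id (φ x) = x := by
  obtain ⟨φ, hφ⟩ := h (W →₀ T) W _ (Finsupp.linearCombination_id_surjective T W) F hF .id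
  exact ⟨φ, fun x hx => (hφ x hx).symm⟩

/-- `W` is locally projective iff for every finite subset `{w_1,…,w_k} ⊆ W` there
are finitely many pairs `(f_i, w̃_i) ∈ Hom_T(W,T) × W` such that
`w_j = Σ_i f_i(w_j)·w̃_i` for all `j`. -/
theorem stmt_1 (T W : Type) [Ring T] [AddCommGroup W] [Module T W] :
    LocallyProjective T W ↔
      ∀ (k : ℕ) (w : Fin k → W), ∃ (n : ℕ) (f : Fin n → (W →ₗ[T] T)) (wt : Fin n → W),
        ∀ j, w j = ∑ i, f i (w j) • wt i := by
  constructor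
  · intro h k w
    obtain ⟨φ, hφ⟩ := h.exists_linearCombination_eq (Submodule.fg_span (Set.finite_range w))
    exact exists_fin_dualPairs_of_linearCombination_eq w φ
      fun j => hφ _ (Submodule.subset_span ⟨j, rfl⟩)
  · intro H L N _ _ _ _ π hπ F hF g
    obtain ⟨k, w, rfl⟩ := Submodule.fg_iff_exists_fin_generating_family.1 hF
    obtain ⟨n, f, wt, hw⟩ := H k w
    exact exists_lift_eqOn_span_of_eq_sum_smul hπ g f wt (by rintro _ ⟨j, rfl⟩; exact hw j)
end

section
/- Let T be a ring and W a left T-module with S := End(_T W)^op. Then W is locally projective if and only if the image of the canonical map [,]_W : Hom_T(W,T) ⊗_T W → End(_T W) is dense in End(_T W) with respect to the finite topology. -/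
def HasLocalDualBases (T W : Type) [Ring T] [AddCommGroup W] [Module T W] : Prop :=
  ∀ S : Finset W, ∃ (n : ℕ) (f : Fin n → W →ₗ[T] T) (v : Fin n → W),
    ∀ x ∈ S, x = ∑ i, f i x • v i

section

variable {T W : Type} [Ring T] [AddCommGroup W] [Module T W]

theorem exists_lift_eqOn_span {L N ι : Type} [AddCommGroup L] [Module T L] [AddCommGroup N]
    [Module T N] [Fintype ι] (π : L →ₗ[T] N) (hπ : Function.Surjective π) (g : W →ₗ[T] N)
    {S : Set W} (f : ι → W →ₗ[T] T) (v : ι → W) (hS : ∀ x ∈ S, x = ∑ i, f i x • v i) :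
    ∃ g' : W →ₗ[T] L, ∀ x ∈ Submodule.span T S, g x = π (g' x) := by
  choose l hl using fun i => hπ (g (v i))
  refine ⟨∑ i, (LinearMap.toSpanSingleton T L (l i)).comp (f i), fun x hx => ?_⟩
  suffices Submodule.span T S ≤ LinearMap.eqLocus g
      (π.comp (∑ i, (LinearMap.toSpanSingleton T L (l i)).comp (f i))) from this hx
  rw [Submodule.span_le]
  intro a ha
  rw [SetLike.mem_coe, LinearMap.mem_eqLocus]
  conv_lhs => rw [hS a ha]
  simp [map_sum, map_smul, hl]

theorem LocallyProjective.of_hasLocalDualBases (h : HasLocalDualBases T W) :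
    LocallyProjective T W := by
  intro L N _ _ _ _ π hπ F ⟨S, hS⟩ g
  obtain ⟨n, f, v, hv⟩ := h S
  obtain ⟨g', hg'⟩ := exists_lift_eqOn_span π hπ g f v hv
  exact ⟨g', fun x hx => hg' x (hS ▸ hx)⟩

theorem LocallyProjective.hasLocalDualBases (h : LocallyProjective T W) :
    HasLocalDualBases T W := by
  classical
  intro S
  obtain ⟨g', hg'⟩ := h (W →₀ T) W (Finsupp.linearCombination T id)
    (Finsupp.linearCombination_id_surjective T W) (Submodule.span T S)
    (Submodule.fg_span S.finite_toSet) LinearMap.id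
  let s : Finset W := S.biUnion fun x => (g' x).support
  refine ⟨s.card, fun i => (Finsupp.lapply (s.equivFin.symm i : W)).comp g',
    fun i => s.equivFin.symm i, fun x hx => ?_⟩
  have hsupp : (g' x).support ⊆ s := Finset.subset_biUnion_of_mem (fun x => (g' x).support) hx
  calc x = Finsupp.linearCombination T id (g' x) := hg' x (Submodule.subset_span hx)
    _ = ∑ a ∈ s, g' x a • a := by
      rw [Finsupp.linearCombination_apply, Finsupp.sum_of_support_subset _ hsupp _ (by simp)]
      rfl
    _ = _ := by
      rw [← Finset.sum_coe_sort s, ← s.equivFin.symm.sum_comp]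
      rfl

theorem locallyProjective_iff_hasLocalDualBases :
    LocallyProjective T W ↔ HasLocalDualBases T W :=
  ⟨LocallyProjective.hasLocalDualBases, LocallyProjective.of_hasLocalDualBases⟩

end

/-- Elements of the image of `[,]_W` are the finite sums `w' ↦ ∑ fᵢ(w') • w̃ᵢ`; density in the
finite topology means agreeing with any `g` on any finite family `w`. -/
theorem stmt_3 (T W : Type) [Ring T] [AddCommGroup W] [Module T W] :
    LocallyProjective T W ↔
      ∀ (g : W →ₗ[T] W) (k : ℕ) (w : Fin k → W),
        ∃ (n : ℕ) (f : Fin n → (W →ₗ[T] T)) (wt : Fin n → W),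
          ∀ j, g (w j) = ∑ i, f i (w j) • wt i := by
  classical
  rw [locallyProjective_iff_hasLocalDualBases]
  constructor
  · intro h g k w
    obtain ⟨n, f, v, hv⟩ := h (Finset.univ.image w)
    refine ⟨n, f, fun i => g (v i), fun j => ?_⟩
    conv_lhs => rw [hv (w j) (by simp)]
    simp [map_sum, map_smul]
  · intro h S
    obtain ⟨n, f, v, hv⟩ := h LinearMap.id S.card fun j => S.equivFin.symm j
    exact ⟨n, f, v, fun x hx => by simpa using hv (S.equivFin ⟨x, hx⟩)⟩
end

section
/- Every semi-strict unital Morita context is strict: if M = (T,S,P,Q,<,>_T,<,>_S) is a unital Morita context with both <,>_T and <,>_S surjective, then both are bijective. -/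
open MulOpposite

/-- `tp : P → Q → X` exhibits `X` as the balanced tensor product `P ⊗[S] Q` of a
right `S`-module `P` and a left `S`-module `Q`: it is biadditive, `S`-balanced,
and satisfies the universal property. -/
structure IsBalancedTensor (S : Type) [Ring S]
    (P : Type) [AddCommGroup P] [Module Sᵐᵒᵖ P]
    (Q : Type) [AddCommGroup Q] [Module S Q]
    (X : Type) [AddCommGroup X] (tp : P → Q → X) : Prop where
  add_left : ∀ p p' q, tp (p + p') q = tp p q + tp p' q
  add_right : ∀ p q q', tp p (q + q') = tp p q + tp p q'
  balanced : ∀ p (s : S) q, tp (op s • p) q = tp p (s • q)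
  lift : ∀ (Y : Type) [AddCommGroup Y] (f : P → Q → Y),
      (∀ p p' q, f (p + p') q = f p q + f p' q) →
      (∀ p q q', f p (q + q') = f p q + f p q') →
      (∀ p (s : S) q, f (op s • p) q = f p (s • q)) →
      ∃! g : X →+ Y, ∀ p q, g (tp p q) = f p q

/-- A pairing `b : M × N → R`, where `M` is an `(R,R')`-bimodule and `N` an
`(R',R)`-bimodule, which is `(R,R)`-bilinear and `R'`-balanced. -/
structure IsPairing (R R' : Type) [Ring R] [Ring R']
    (M : Type) [AddCommGroup M] [Module R M] [Module R'ᵐᵒᵖ M]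
    (N : Type) [AddCommGroup N] [Module R' N] [Module Rᵐᵒᵖ N]
    (b : M → N → R) : Prop where
  add_left : ∀ m m' n, b (m + m') n = b m n + b m' n
  add_right : ∀ m n n', b m (n + n') = b m n + b m n'
  smul_left : ∀ (r : R) m n, b (r • m) n = r * b m n
  smul_right : ∀ m (r : R) n, b m (op r • n) = b m n * r
  balanced : ∀ m (r' : R') n, b (op r' • m) n = b m (r' • n)

/-!
If `β x₀ = 1`, then `t ↦ t • x₀` is a left inverse of `β : P ⊗[S] Q → T`: on a generator,
`⟨p, q⟩_T • x₀ = p ⊗ (q · β x₀) = p ⊗ q`, by the Morita compatibilities and `S`-balancedness.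
So a surjective connecting map is injective, and the same argument applies to `Q ⊗[T] P → S`.
-/

namespace IsBalancedTensor

variable {S P Q X : Type} [Ring S] [AddCommGroup P] [Module Sᵐᵒᵖ P] [AddCommGroup Q]
  [Module S Q] [AddCommGroup X] {tp : P → Q → X}

theorem hom_ext (h : IsBalancedTensor S P Q X tp) {Y : Type} [AddCommGroup Y] {f g : X →+ Y}
    (hfg : ∀ p q, f (tp p q) = g (tp p q)) : f = g :=
  (h.lift Y (fun p q => g (tp p q)) (fun p p' q => by rw [h.add_left, map_add])
    (fun p q q' => by rw [h.add_right, map_add]) (fun p s q => by rw [h.balanced])).unique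
    hfg fun _ _ => rfl

variable {T : Type} [Semiring T] [Module T P] [SMulCommClass T Sᵐᵒᵖ P]

theorem exists_lsmul (h : IsBalancedTensor S P Q X tp) (t : T) :
    ∃ g : X →+ X, ∀ p q, g (tp p q) = tp (t • p) q :=
  (h.lift X (fun p q => tp (t • p) q) (fun p p' q => by rw [smul_add, h.add_left])
    (fun p q q' => h.add_right _ _ _) (fun p s q => by rw [smul_comm, h.balanced])).exists

noncomputable def lsmul (h : IsBalancedTensor S P Q X tp) (t : T) : X →+ X :=
  (h.exists_lsmul t).choose

theorem lsmul_tp (h : IsBalancedTensor S P Q X tp) (t : T) (p : P) (q : Q) :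
    h.lsmul t (tp p q) = tp (t • p) q :=
  (h.exists_lsmul t).choose_spec p q

theorem lsmul_add (h : IsBalancedTensor S P Q X tp) (t t' : T) :
    h.lsmul (t + t') = h.lsmul t + h.lsmul t' :=
  h.hom_ext fun p q => by
    rw [AddMonoidHom.add_apply, lsmul_tp, lsmul_tp, lsmul_tp, add_smul, h.add_left]

variable [Module Tᵐᵒᵖ Q] {bT : P → Q → T} {bS : Q → P → S}

theorem lsmul_pairing (h : IsBalancedTensor S P Q X tp)
    (hcomp1 : ∀ (q : Q) (p : P) (q' : Q), bS q p • q' = op (bT p q') • q)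
    (hcomp2 : ∀ (p : P) (q : Q) (p' : P), op (bS q p') • p = bT p q • p')
    {β : X →+ T} (hβ : ∀ p q, β (tp p q) = bT p q) (p : P) (q : Q) (x : X) :
    h.lsmul (bT p q) x = tp p (op (β x) • q) := by
  let ρ : T →+ X := AddMonoidHom.mk' (fun t => tp p (op t • q)) fun t t' => by
    rw [op_add, add_smul, h.add_right]
  have hρ : h.lsmul (bT p q) = ρ.comp β := h.hom_ext fun a b => by
    rw [lsmul_tp, ← hcomp2, h.balanced, hcomp1, AddMonoidHom.comp_apply, hβ]
    rfl
  exact DFunLike.congr_fun hρ x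

theorem injective_of_surjective (h : IsBalancedTensor S P Q X tp)
    (hcomp1 : ∀ (q : Q) (p : P) (q' : Q), bS q p • q' = op (bT p q') • q)
    (hcomp2 : ∀ (p : P) (q : Q) (p' : P), op (bS q p') • p = bT p q • p')
    {β : X →+ T} (hβ : ∀ p q, β (tp p q) = bT p q) (hsurj : Function.Surjective β) :
    Function.Injective β := by
  obtain ⟨x₀, hx₀⟩ := hsurj 1
  let ψ : T →+ X := AddMonoidHom.mk' (fun t => h.lsmul t x₀) fun t t' => by
    rw [h.lsmul_add]
    rfl
  have hψ : ψ.comp β = AddMonoidHom.id X := h.hom_ext fun p q => by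
    simp only [ψ, AddMonoidHom.comp_apply, AddMonoidHom.mk'_apply, hβ,
      h.lsmul_pairing hcomp1 hcomp2 hβ, hx₀, op_one, one_smul, AddMonoidHom.id_apply]
  exact Function.LeftInverse.injective (g := ψ) (DFunLike.congr_fun hψ)

end IsBalancedTensor

variable (T S P Q : Type) [Ring T] [Ring S]
  [AddCommGroup P] [Module T P] [Module Sᵐᵒᵖ P] [SMulCommClass T Sᵐᵒᵖ P]
  [AddCommGroup Q] [Module S Q] [Module Tᵐᵒᵖ Q] [SMulCommClass S Tᵐᵒᵖ Q]

theorem stmt_11 (bT : P → Q → T) (bS : Q → P → S)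
    (hcomp1 : ∀ (q : Q) (p : P) (q' : Q), bS q p • q' = op (bT p q') • q)
    (hcomp2 : ∀ (p : P) (q : Q) (p' : P), op (bS q p') • p = bT p q • p')
    (X : Type) [AddCommGroup X] (tpX : P → Q → X)
    (hX : IsBalancedTensor S P Q X tpX)
    (βT : X →+ T) (hβT : ∀ p q, βT (tpX p q) = bT p q)
    (Y : Type) [AddCommGroup Y] (tpY : Q → P → Y)
    (hY : IsBalancedTensor T Q P Y tpY)
    (βS : Y →+ S) (hβS : ∀ q p, βS (tpY q p) = bS q p)
    (hTsurj : Function.Surjective βT) (hSsurj : Function.Surjective βS) :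
    Function.Bijective βT ∧ Function.Bijective βS :=
  ⟨⟨hX.injective_of_surjective hcomp1 hcomp2 hβT hTsurj, hTsurj⟩,
    ⟨hY.injective_of_surjective (fun p q p' => (hcomp2 p q p').symm)
      (fun q p q' => (hcomp1 q p q').symm) hβS hSsurj, hSsurj⟩⟩
end

section
/- Let M = (T,S,P,Q,<,>_T,<,>_S) be a Morita context with <,>_S injective, and let J := Im(<,>_S) ⊴ S. If J is strongly faithful as a left S-module (for every left S-module V, the map V → Hom_S(J,V), v ↦ (s ↦ sv), is injective), then for every left T-module U the canonical map α_U : Q ⊗_T U → Hom_{T}(P,U), Σ q_i ⊗ u_i ↦ (p ↦ Σ <p,q_i>_T u_i), is injective. -/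
open MulOpposite

/-! `Q ⊗_T U` is a left `S`-module through `Q`, and the compatibility
`⟨q,p⟩_S • q' = q • ⟨p,q'⟩_T` turns the action of `⟨q,p⟩_S` on `z ∈ Q ⊗_T U` into
`q ⊗ α_U(z)(p)`. So if `α_U z = 0`, every element of the trace ideal `J` kills `z`,
and strong faithfulness of `J` forces `z = 0`. -/

namespace IsBalancedTensor

variable {R : Type} [Ring R] {M : Type} [AddCommGroup M] [Module Rᵐᵒᵖ M]
  {N : Type} [AddCommGroup N] [Module R N] {X : Type} [AddCommGroup X] {tp : M → N → X}

theorem hom_ext_s12 (h : IsBalancedTensor R M N X tp) {Y : Type} [AddCommGroup Y]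
    {g₁ g₂ : X →+ Y} (hg : ∀ m n, g₁ (tp m n) = g₂ (tp m n)) : g₁ = g₂ :=
  (h.lift Y (fun m n => g₂ (tp m n)) (by simp [h.add_left]) (by simp [h.add_right])
    (by simp [h.balanced])).unique hg fun _ _ => rfl

theorem tp_zero_right (h : IsBalancedTensor R M N X tp) (m : M) : tp m 0 = 0 := by
  simpa using h.add_right m 0 0

theorem exists_leftModule (h : IsBalancedTensor R M N X tp) (A : Type) [Ring A] [Module A M]
    [SMulCommClass A Rᵐᵒᵖ M] :
    ∃ _ : Module A X, ∀ (a : A) m n, a • tp m n = tp (a • m) n := by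
  choose act hact using fun a : A =>
    (h.lift X (fun m n => tp (a • m) n) (by simp [smul_add, h.add_left])
      (by simp [h.add_right]) (fun m r n => by rw [smul_comm, h.balanced])).exists
  let φ : A →+* AddMonoid.End X := RingHom.mk'
    { toFun := act
      map_one' := h.hom_ext_s12 fun m n => by rw [hact, one_smul]; rfl
      map_mul' := fun a b => h.hom_ext_s12 fun m n => by rw [hact, mul_smul, ← hact, ← hact]; rfl }
    fun a b => h.hom_ext_s12 fun m n => by
      show act (a + b) (tp m n) = act a (tp m n) + act b (tp m n)
      rw [hact, add_smul, h.add_left, hact, hact]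
  exact ⟨Module.compHom X φ, hact⟩

end IsBalancedTensor

section MoritaContext

variable {T S P Q U Z : Type} [Ring T] [Ring S] [AddCommGroup P] [Module T P]
  [AddCommGroup Q] [Module S Q] [Module Tᵐᵒᵖ Q] [AddCommGroup U] [Module T U]
  [AddCommGroup Z] [Module S Z] {bT : P → Q → T} {bS : Q → P → S} {tpZ : Q → U → Z}
  {αU : Z →+ (P →ₗ[T] U)}

theorem pairing_smul_eq_tp_apply (hcomp : ∀ q p q', bS q p • q' = op (bT p q') • q)
    (hZ : IsBalancedTensor T Q U Z tpZ) (hsmul : ∀ (s : S) q u, s • tpZ q u = tpZ (s • q) u)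
    (hαU : ∀ q u p, αU (tpZ q u) p = bT p q • u) (q : Q) (p : P) (z : Z) :
    bS q p • z = tpZ q (αU z p) := by
  let rhs : Z →+ Z := AddMonoidHom.mk' (fun z => tpZ q (αU z p)) (by simp [hZ.add_right])
  have : smulAddHom S Z (bS q p) = rhs := hZ.hom_ext_s12 fun q' u => by
    simp [rhs, hsmul, hcomp, hZ.balanced, hαU]
  exact DFunLike.congr_fun this z

theorem trace_smul_eq_zero_of_map_eq_zero (hcomp : ∀ q p q', bS q p • q' = op (bT p q') • q)
    (hZ : IsBalancedTensor T Q U Z tpZ) (hsmul : ∀ (s : S) q u, s • tpZ q u = tpZ (s • q) u)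
    (hαU : ∀ q u p, αU (tpZ q u) p = bT p q • u) {X : Type} [AddCommGroup X] {tpX : Q → P → X}
    (hX : IsBalancedTensor T Q P X tpX) {βS : X →+ S} (hβS : ∀ q p, βS (tpX q p) = bS q p)
    {z : Z} (hz : αU z = 0) (x : X) : βS x • z = 0 := by
  have : ((smulAddHom S Z).flip z).comp βS = 0 := hX.hom_ext_s12 fun q p => by
    simp [hβS, pairing_smul_eq_tp_apply hcomp hZ hsmul hαU, hz, hZ.tp_zero_right]
  exact DFunLike.congr_fun this x

end MoritaContext

variable (T S P Q : Type) [Ring T] [Ring S]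
  [AddCommGroup P] [Module T P] [Module Sᵐᵒᵖ P] [SMulCommClass T Sᵐᵒᵖ P]
  [AddCommGroup Q] [Module S Q] [Module Tᵐᵒᵖ Q] [SMulCommClass S Tᵐᵒᵖ Q]

theorem stmt_12 (bT : P → Q → T) (bS : Q → P → S)
    (hcomp1 : ∀ (q : Q) (p : P) (q' : Q), bS q p • q' = op (bT p q') • q)
    (X : Type) [AddCommGroup X] (tpX : Q → P → X)
    (hX : IsBalancedTensor T Q P X tpX)
    (βS : X →+ S) (hβS : ∀ q p, βS (tpX q p) = bS q p)
    (hsf : ∀ (V : Type) [AddCommGroup V] [Module S V] (v : V),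
      (∀ x : X, βS x • v = 0) → v = 0) :
    ∀ (U : Type) [AddCommGroup U] [Module T U]
      (Z : Type) [AddCommGroup Z] (tpZ : Q → U → Z),
      IsBalancedTensor T Q U Z tpZ →
      ∀ (αU : Z →+ (P →ₗ[T] U)),
        (∀ (q : Q) (u : U) (p : P), αU (tpZ q u) p = bT p q • u) →
        Function.Injective αU := by
  intro U _ _ Z _ tpZ hZ αU hαU
  obtain ⟨_, hsmul⟩ := hZ.exists_leftModule S
  refine (injective_iff_map_eq_zero αU).2 fun z hz => hsf Z z ?_
  exact trace_smul_eq_zero_of_map_eq_zero hcomp1 hZ hsmul hαU hX hβS hz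
end

section
/- Let T, S be unital rings, P a (T,S)-bimodule, E an injective cogenerator in the category of left T-modules, and #P := Hom_T(P, E), a left S-module. For any left S-module L, L is #P-cogenerated (embeds in a product (#P)^Λ) if and only if the canonical unit map η_{P,L} : L → Hom_T(P, P ⊗_S L), l ↦ (p ↦ p ⊗ l), is injective. -/
/-!
By the tensor–hom adjunction, an `S`-linear map `L → #P` is the same as a `T`-linear map
`P ⊗_S L → E`, so every `S`-linear map `L → (#P)^Λ` factors through `η`; hence `η` is injective
whenever `L` is `#P`-cogenerated. Conversely, with `Λ = Hom_T(P ⊗_S L, E)` the map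
`l ↦ (g ↦ g ∘ η l)` is injective once `η` is, because `E` cogenerates `P ⊗_S L`.
-/

open MulOpposite

/-- The left `S`-module structure on `Hom_T(P,K)` induced by the right
`S`-action on `P`: `(s • f)(p) = f(p·s)`. -/
noncomputable instance homSModule (T S P : Type) [Ring T] [Ring S]
    [AddCommGroup P] [Module T P] [Module Sᵐᵒᵖ P] [SMulCommClass T Sᵐᵒᵖ P]
    (K : Type) [AddCommGroup K] [Module T K] :
    Module S (P →ₗ[T] K) where
  smul s f :=
    { toFun := fun p => f (op s • p)
      map_add' := fun p p' => by show f (op s • (p + p')) = _; rw [smul_add, map_add]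
      map_smul' := fun t p => by
        show f (op s • t • p) = t • f (op s • p)
        rw [← smul_comm t (op s) p, map_smul] }
  one_smul f := LinearMap.ext fun p => by
    show f (op (1 : S) • p) = f p
    rw [op_one, one_smul]
  mul_smul s s' f := LinearMap.ext fun p => by
    show f (op (s * s') • p) = f (op s' • op s • p)
    rw [op_mul, mul_smul]
  smul_zero s := LinearMap.ext fun p => rfl
  smul_add s f g := LinearMap.ext fun p => rfl
  add_smul s s' f := LinearMap.ext fun p => by
    show f (op (s + s') • p) = f (op s • p) + f (op s' • p)
    rw [← map_add, ← add_smul]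
    rfl
  zero_smul f := LinearMap.ext fun p => by
    show f (op (0 : S) • p) = 0
    have : (op (0 : S) : Sᵐᵒᵖ) = 0 := rfl
    rw [this, zero_smul, map_zero]

namespace IsBalancedTensor

variable {T S P L Z : Type} [Ring T] [Ring S] [AddCommGroup P] [Module Sᵐᵒᵖ P]
  [AddCommGroup L] [Module S L] [AddCommGroup Z] {tpZ : P → L → Z}

theorem addHom_ext (hZ : IsBalancedTensor S P L Z tpZ) {Y : Type} [AddCommGroup Y]
    {A B : Z →+ Y} (h : ∀ p l, A (tpZ p l) = B (tpZ p l)) : A = B := by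
  obtain ⟨_, -, huniq⟩ := hZ.lift Y (fun p l => A (tpZ p l))
    (fun p p' l => by rw [hZ.add_left, map_add])
    (fun p l l' => by rw [hZ.add_right, map_add])
    (fun p s l => by rw [hZ.balanced])
  rw [huniq A fun _ _ => rfl, huniq B fun p l => (h p l).symm]

theorem zero_left (hZ : IsBalancedTensor S P L Z tpZ) (l : L) : tpZ 0 l = 0 :=
  (AddMonoidHom.mk' (tpZ · l) fun p p' => hZ.add_left p p' l).map_zero

noncomputable def liftAddHom (hZ : IsBalancedTensor S P L Z tpZ) {Y : Type} [AddCommGroup Y]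
    (f : P → L → Y) (hadd_left : ∀ p p' l, f (p + p') l = f p l + f p' l)
    (hadd_right : ∀ p l l', f p (l + l') = f p l + f p l')
    (hbalanced : ∀ p (s : S) l, f (op s • p) l = f p (s • l)) : Z →+ Y :=
  (hZ.lift Y f hadd_left hadd_right hbalanced).choose

theorem liftAddHom_tmul (hZ : IsBalancedTensor S P L Z tpZ) {Y : Type} [AddCommGroup Y]
    (f : P → L → Y) (hadd_left : ∀ p p' l, f (p + p') l = f p l + f p' l)
    (hadd_right : ∀ p l l', f p (l + l') = f p l + f p l')
    (hbalanced : ∀ p (s : S) l, f (op s • p) l = f p (s • l)) (p : P) (l : L) :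
    hZ.liftAddHom f hadd_left hadd_right hbalanced (tpZ p l) = f p l :=
  (hZ.lift Y f hadd_left hadd_right hbalanced).choose_spec.1 p l

variable [Module T P] [SMulCommClass T Sᵐᵒᵖ P]

noncomputable def tsmul (hZ : IsBalancedTensor S P L Z tpZ) (t : T) : Z →+ Z :=
  hZ.liftAddHom (fun p l => tpZ (t • p) l)
    (fun p p' l => by rw [smul_add, hZ.add_left])
    (fun p l l' => hZ.add_right _ l l')
    (fun p s l => by rw [smul_comm, hZ.balanced])

theorem tsmul_tmul (hZ : IsBalancedTensor S P L Z tpZ) (t : T) (p : P) (l : L) :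
    hZ.tsmul t (tpZ p l) = tpZ (t • p) l :=
  hZ.liftAddHom_tmul _ _ _ _ p l

noncomputable def tsmulHom (hZ : IsBalancedTensor S P L Z tpZ) : T →+* AddMonoid.End Z where
  toFun := hZ.tsmul
  map_one' := hZ.addHom_ext fun p l => by
    rw [hZ.tsmul_tmul, one_smul]
    rfl
  map_mul' t t' := hZ.addHom_ext fun p l => by
    change _ = hZ.tsmul t (hZ.tsmul t' (tpZ p l))
    rw [hZ.tsmul_tmul, hZ.tsmul_tmul, hZ.tsmul_tmul, mul_smul]
  map_zero' := hZ.addHom_ext fun p l => by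
    rw [hZ.tsmul_tmul, zero_smul, hZ.zero_left]
    rfl
  map_add' t t' := hZ.addHom_ext fun p l => by
    change _ = hZ.tsmul t (tpZ p l) + hZ.tsmul t' (tpZ p l)
    rw [hZ.tsmul_tmul, hZ.tsmul_tmul, hZ.tsmul_tmul, add_smul, hZ.add_left]

noncomputable abbrev tModule (hZ : IsBalancedTensor S P L Z tpZ) : Module T Z :=
  Module.compHom Z hZ.tsmulHom

theorem apply_eq_of_tmul_eq (hZ : IsBalancedTensor S P L Z tpZ) {K : Type} [AddCommGroup K]
    [Module T K] (f : L →ₗ[S] (P →ₗ[T] K)) {l l' : L} (h : ∀ p, tpZ p l = tpZ p l') :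
    f l = f l' := by
  ext p
  have hfactor := hZ.liftAddHom_tmul (fun p l => f l p)
    (fun p p' l => map_add (f l) p p')
    (fun p l l' => by rw [map_add]; rfl)
    (fun p s l => by rw [map_smul f s l]; rfl)
  rw [← hfactor p l, h p, hfactor]

theorem injective_tmul_of_injective (hZ : IsBalancedTensor S P L Z tpZ) {Λ K : Type}
    [AddCommGroup K] [Module T K] (φ : L →ₗ[S] (Λ → (P →ₗ[T] K))) (hφ : Function.Injective φ) :
    Function.Injective fun l p => tpZ p l := fun _ _ h =>
  hφ <| funext fun i => hZ.apply_eq_of_tmul_eq ((LinearMap.proj i).comp φ) (congrFun h)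

variable [Module T Z]

def compTmul (hZ : IsBalancedTensor S P L Z tpZ)
    (hsmul : ∀ (t : T) p l, t • tpZ p l = tpZ (t • p) l) (K : Type) [AddCommGroup K]
    [Module T K] : L →ₗ[S] ((Z →ₗ[T] K) → (P →ₗ[T] K)) where
  toFun l g :=
    { toFun := fun p => g (tpZ p l)
      map_add' := fun p p' => by rw [hZ.add_left, map_add]
      map_smul' := fun t p => by rw [← hsmul, map_smul]; rfl }
  map_add' l l' := funext fun g => LinearMap.ext fun p => by
    change g (tpZ p (l + l')) = g (tpZ p l) + g (tpZ p l')
    rw [hZ.add_right, map_add]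
  map_smul' s l := funext fun g => LinearMap.ext fun p => by
    change g (tpZ p (s • l)) = g (tpZ (op s • p) l)
    rw [hZ.balanced]

theorem compTmul_injective (hZ : IsBalancedTensor S P L Z tpZ)
    (hsmul : ∀ (t : T) p l, t • tpZ p l = tpZ (t • p) l) {K : Type} [AddCommGroup K]
    [Module T K] (hK : ∀ z : Z, z ≠ 0 → ∃ g : Z →ₗ[T] K, g z ≠ 0)
    (hη : Function.Injective fun l p => tpZ p l) :
    Function.Injective (hZ.compTmul hsmul K) := by
  intro l l' h
  refine hη (funext fun p => ?_)
  by_contra hne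
  obtain ⟨g, hg⟩ := hK _ (sub_ne_zero.mpr hne)
  refine hg ?_
  rw [map_sub, sub_eq_zero]
  exact LinearMap.congr_fun (congrFun h g) p

end IsBalancedTensor

variable (T S P Q : Type) [Ring T] [Ring S]
  [AddCommGroup P] [Module T P] [Module Sᵐᵒᵖ P] [SMulCommClass T Sᵐᵒᵖ P]
  [AddCommGroup Q] [Module S Q] [Module Tᵐᵒᵖ Q] [SMulCommClass S Tᵐᵒᵖ Q]

theorem stmt_14 (E : Type) [AddCommGroup E] [Module T E]
    (hEcog : ∀ (M : Type) [AddCommGroup M] [Module T M] (m : M), m ≠ 0 →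
      ∃ g : M →ₗ[T] E, g m ≠ 0)
    (L : Type) [AddCommGroup L] [Module S L]
    (Z : Type) [AddCommGroup Z] (tpZ : P → L → Z)
    (hZ : IsBalancedTensor S P L Z tpZ) :
    (∃ (Λ : Type) (φ : L →ₗ[S] (Λ → (P →ₗ[T] E))), Function.Injective φ) ↔
      Function.Injective (fun l : L => fun p : P => tpZ p l) := by
  let := hZ.tModule (T := T)
  exact ⟨fun ⟨_, φ, hφ⟩ => hZ.injective_tmul_of_injective φ hφ,
    fun hη => ⟨_, hZ.compTmul hZ.tsmul_tmul E, hZ.compTmul_injective _ (hEcog Z) hη⟩⟩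
end

section
/- Let M = (T,S,P,Q,<,>_T,<,>_S) be a unital Morita context with trace ideal I := Im(<,>_T) ⊴ T. Then every left T-module K with IK = K is P-generated: the evaluation map P ⊗_S Hom_T(P,K) → K is surjective. -/
/-!
If `k = Σ ⟨pⱼ, qⱼ⟩_T • kⱼ`, then `fⱼ := ⟨-, qⱼ⟩_T • kⱼ` is a `T`-linear map `P → K`, since the
pairing is left `T`-linear in its first argument, and `k = Σ fⱼ(pⱼ)`.
-/

open MulOpposite

namespace IsPairing

variable {T S P Q : Type} [Ring T] [Ring S]
  [AddCommGroup P] [Module T P] [Module Sᵐᵒᵖ P]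
  [AddCommGroup Q] [Module S Q] [Module Tᵐᵒᵖ Q]
  {bT : P → Q → T}

def pairLeft (hbT : IsPairing T S P Q bT) (q : Q) : P →ₗ[T] T where
  toFun p := bT p q
  map_add' p p' := hbT.add_left p p' q
  map_smul' t p := hbT.smul_left t p q

theorem exists_sum_smul_eq_sum_linearMap_apply (hbT : IsPairing T S P Q bT)
    {K : Type} [AddCommGroup K] [Module T K] {n : ℕ}
    (p : Fin n → P) (q : Fin n → Q) (k : Fin n → K) :
    ∃ f : Fin n → (P →ₗ[T] K), ∑ j, bT (p j) (q j) • k j = ∑ j, f j (p j) :=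
  ⟨fun j => (hbT.pairLeft (q j)).smulRight (k j), rfl⟩

end IsPairing

variable (T S P Q : Type) [Ring T] [Ring S]
  [AddCommGroup P] [Module T P] [Module Sᵐᵒᵖ P] [SMulCommClass T Sᵐᵒᵖ P]
  [AddCommGroup Q] [Module S Q] [Module Tᵐᵒᵖ Q] [SMulCommClass S Tᵐᵒᵖ Q]

theorem stmt_15 (bT : P → Q → T) (hbT : IsPairing T S P Q bT)
    (K : Type) [AddCommGroup K] [Module T K]
    (hdiv : ∀ k : K, ∃ (n : ℕ) (p : Fin n → P) (q : Fin n → Q) (kk : Fin n → K),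
      k = ∑ j, bT (p j) (q j) • kk j) :
    ∀ k : K, ∃ (n : ℕ) (p : Fin n → P) (f : Fin n → (P →ₗ[T] K)),
      k = ∑ i, f i (p i) := by
  intro k
  obtain ⟨n, p, q, kk, rfl⟩ := hdiv k
  obtain ⟨f, hf⟩ := hbT.exists_sum_smul_eq_sum_linearMap_apply p q kk
  exact ⟨n, p, f, hf⟩
end

section
/- Let M = (T,S,P,Q,<,>_T,<,>_S) be a unital Morita context such that the pairing P_r = (Q, P_S) satisfies the α-condition (for every right S-module U, the map α_U : U ⊗_S P → Hom_{-S}(Q,U) induced by <,>_S is injective). Then for every left T-module K that is P-generated, the evaluation map ω_{P,K} : P ⊗_S Hom_T(P,K) → K is bijective; that is, Gen(_T P) = Stat^l(_T P_S). -/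
/-!
Let `α : P ⊗_S Hom_T(P,K) → Hom_S(Q, Hom_T(P,K))` be the map of the α-condition. The
compatibility `p·⟨q,p'⟩_S = ⟨p,q⟩_T p'` gives `α(z)(q)(p') = ⟨p',q⟩_T · ω(z)`, so `ω z = 0`
forces `α z = 0`, hence `z = 0` by the α-condition. Surjectivity of `ω` is exactly the
hypothesis that `K` is `P`-generated.
-/

open MulOpposite

namespace IsBalancedTensor

variable {R M N X : Type} [Ring R] [AddCommGroup M] [Module Rᵐᵒᵖ M]
  [AddCommGroup N] [Module R N] [AddCommGroup X] {tp : M → N → X}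

theorem addMonoidHom_ext (htp : IsBalancedTensor R M N X tp) {Y : Type} [AddCommGroup Y]
    {g g' : X →+ Y} (h : ∀ m n, g (tp m n) = g' (tp m n)) : g = g' := by
  obtain ⟨_, -, huniq⟩ := htp.lift Y (fun m n => g (tp m n))
    (fun m m' n => by rw [htp.add_left, map_add])
    (fun m n n' => by rw [htp.add_right, map_add])
    (fun m r n => by rw [htp.balanced])
  exact (huniq g fun _ _ => rfl).trans (huniq g' fun m n => (h m n).symm).symm

/-- `a` is the map `α_N : M ⊗_R N → Hom(Q, N)`, `m ⊗ n ↦ (q ↦ ⟨q,m⟩ n)`, of the α-condition. -/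
theorem exists_alpha (htp : IsBalancedTensor R M N X tp) {R' Q : Type} [Ring R']
    [Module R' M] [AddCommGroup Q] [Module R Q] [Module R'ᵐᵒᵖ Q] {b : Q → M → R}
    (hb : IsPairing R R' Q M b) :
    ∃ a : X →+ (Q → N), ∀ m n q, a (tp m n) q = b q m • n := by
  obtain ⟨a, ha, -⟩ := htp.lift (Q → N) (fun m n q => b q m • n)
    (fun m m' n => funext fun q => by simp only [hb.add_right, add_smul, Pi.add_apply])
    (fun m n n' => funext fun q => smul_add _ _ _)
    (fun m r n => funext fun q => by simp only [hb.smul_right, mul_smul])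
  exact ⟨a, fun m n q => by rw [ha]⟩

end IsBalancedTensor

section Evaluation

variable {T S P : Type} [Ring T] [Ring S]
  [AddCommGroup P] [Module T P] [Module Sᵐᵒᵖ P] [SMulCommClass T Sᵐᵒᵖ P]
  {K : Type} [AddCommGroup K] [Module T K]

theorem homSModule_smul_apply (s : S) (f : P →ₗ[T] K) (p : P) : (s • f) p = f (op s • p) :=
  rfl

theorem alpha_apply_apply_eq_smul_omega {Q Z : Type} [AddCommGroup Z] {bT : P → Q → T} {bS : Q → P → S}
    (hcomp : ∀ (p : P) (q : Q) (p' : P), op (bS q p') • p = bT p q • p')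
    {tp : P → (P →ₗ[T] K) → Z} (htp : IsBalancedTensor S P (P →ₗ[T] K) Z tp)
    {a : Z →+ (Q → (P →ₗ[T] K))} (ha : ∀ p f q, a (tp p f) q = bS q p • f)
    {ω : Z →+ K} (hω : ∀ p f, ω (tp p f) = f p) (z : Z) (q : Q) (p : P) :
    a z q p = bT p q • ω z := by
  have hext : ((LinearMap.evalAddMonoidHom p).comp ((Pi.evalAddMonoidHom _ q).comp a)) =
      (DistribSMul.toAddMonoidHom K (bT p q)).comp ω :=
    htp.addMonoidHom_ext fun p' f => by
      simp only [AddMonoidHom.comp_apply, Pi.evalAddMonoidHom_apply,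
        LinearMap.evalAddMonoidHom_apply, DistribSMul.toAddMonoidHom_apply, ha, hω,
        homSModule_smul_apply, hcomp, map_smul]
  exact DFunLike.congr_fun hext z

end Evaluation

variable (T S P Q : Type) [Ring T] [Ring S]
  [AddCommGroup P] [Module T P] [Module Sᵐᵒᵖ P] [SMulCommClass T Sᵐᵒᵖ P]
  [AddCommGroup Q] [Module S Q] [Module Tᵐᵒᵖ Q] [SMulCommClass S Tᵐᵒᵖ Q]

theorem stmt_16 (bT : P → Q → T)
    (bS : Q → P → S) (hbS : IsPairing S T Q P bS)
    (hcomp2 : ∀ (p : P) (q : Q) (p' : P), op (bS q p') • p = bT p q • p')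
    (halpha : ∀ (W : Type) [AddCommGroup W] [Module S W]
      (Z : Type) [AddCommGroup Z] (tpZ : P → W → Z),
      IsBalancedTensor S P W Z tpZ →
      ∀ (a : Z →+ (Q → W)), (∀ (p : P) (w : W) (q : Q), a (tpZ p w) q = bS q p • w) →
        Function.Injective a) :
    ∀ (K : Type) [AddCommGroup K] [Module T K],
      (∀ k : K, ∃ (n : ℕ) (p : Fin n → P) (f : Fin n → (P →ₗ[T] K)),
        k = ∑ i, f i (p i)) →
      ∀ (Z : Type) [AddCommGroup Z] (tpZ : P → (P →ₗ[T] K) → Z),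
        IsBalancedTensor S P (P →ₗ[T] K) Z tpZ →
        ∀ (ω : Z →+ K), (∀ (p : P) (f : P →ₗ[T] K), ω (tpZ p f) = f p) →
          Function.Bijective ω := by
  intro K _ _ hgen Z _ tpZ hZ ω hω
  obtain ⟨a, ha⟩ := hZ.exists_alpha hbS
  refine ⟨(injective_iff_map_eq_zero ω).2 fun z hz => ?_, fun k => ?_⟩
  · refine halpha _ Z tpZ hZ a ha ?_
    rw [map_zero]
    funext q
    ext p
    rw [alpha_apply_apply_eq_smul_omega hcomp2 hZ ha hω, hz, smul_zero]
    rfl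
  · obtain ⟨n, p, f, rfl⟩ := hgen k
    exact ⟨∑ i, tpZ (p i) (f i), by simp only [map_sum, hω]⟩
end

section
/- Let M = (T,S,P,Q,<,>_T,<,>_S) be a Morita context such that the right pairing Q_r = (P, Q_T) satisfies the α-condition. Then for every left T-module V, the natural map η_V : P ⊗_S (Q ⊗_T V) → V, p ⊗ (q ⊗ v) ↦ <p,q>_T v, is injective; i.e. the induced right wide Morita context is injective in its first natural transformation. -/
open MulOpposite

variable (T S P Q : Type) [Ring T] [Ring S]
  [AddCommGroup P] [Module T P] [Module Sᵐᵒᵖ P] [SMulCommClass T Sᵐᵒᵖ P]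
  [AddCommGroup Q] [Module S Q] [Module Tᵐᵒᵖ Q] [SMulCommClass S Tᵐᵒᵖ Q]

theorem IsBalancedTensor.addMonoidHom_ext_s17 {R M N X : Type} [Ring R]
    [AddCommGroup M] [Module Rᵐᵒᵖ M] [AddCommGroup N] [Module R N] [AddCommGroup X]
    {tp : M → N → X} (htp : IsBalancedTensor R M N X tp) {Y : Type} [AddCommGroup Y]
    {f g : X →+ Y} (hfg : ∀ m n, f (tp m n) = g (tp m n)) : f = g := by
  obtain ⟨k, -, hk⟩ := htp.lift Y (fun m n => g (tp m n))
    (fun m m' n => by rw [htp.add_left, map_add])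
    (fun m n n' => by rw [htp.add_right, map_add])
    (fun m r n => by rw [htp.balanced])
  exact (hk f hfg).trans (hk g fun _ _ => rfl).symm

/-- Both sides are additive in `z` and agree on generators `q' ⊗ v` by the compatibility
`⟨q,p⟩_S q' = q ⟨p,q'⟩_T`. -/
theorem IsBalancedTensor.tp_apply_eq_pairing_smul {T S P Q V Z : Type} [Ring T] [Ring S]
    [AddCommGroup Q] [Module S Q] [Module Tᵐᵒᵖ Q] [AddCommGroup V] [Module T V]
    [AddCommGroup Z] [Module S Z] {tp : Q → V → Z} (htp : IsBalancedTensor T Q V Z tp)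
    (htp_smul : ∀ (s : S) q v, s • tp q v = tp (s • q) v)
    {bT : P → Q → T} {bS : Q → P → S}
    (hcomp : ∀ (q : Q) (p : P) (q' : Q), bS q p • q' = op (bT p q') • q)
    {p : P} {f : Z →+ V} (hf : ∀ q v, f (tp q v) = bT p q • v) (q : Q) (z : Z) :
    tp q (f z) = bS q p • z := by
  let tpq : V →+ Z := AddMonoidHom.mk' (tp q) (htp.add_right q)
  change (tpq.comp f) z = DistribSMul.toAddMonoidHom Z (bS q p) z
  congr 1
  refine htp.addMonoidHom_ext_s17 fun q' v => ?_
  simp only [AddMonoidHom.comp_apply, AddMonoidHom.mk'_apply, DistribSMul.toAddMonoidHom_apply,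
    tpq, hf, ← htp.balanced, ← hcomp, htp_smul]

theorem stmt_17 (bT : P → Q → T)
    (bS : Q → P → S)
    (hcomp1 : ∀ (q : Q) (p : P) (q' : Q), bS q p • q' = op (bT p q') • q)
    (halpha : ∀ (W : Type) [AddCommGroup W] [Module S W]
      (Z : Type) [AddCommGroup Z] (tpZ : P → W → Z),
      IsBalancedTensor S P W Z tpZ →
      ∀ (a : Z →+ (Q → W)), (∀ (p : P) (w : W) (q : Q), a (tpZ p w) q = bS q p • w) →
        Function.Injective a) :
    ∀ (V : Type) [AddCommGroup V] [Module T V]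
      (Z₁ : Type) [AddCommGroup Z₁] [Module S Z₁] (tp₁ : Q → V → Z₁),
      IsBalancedTensor T Q V Z₁ tp₁ →
      (∀ (s : S) (q : Q) (v : V), s • tp₁ q v = tp₁ (s • q) v) →
      ∀ (Z₂ : Type) [AddCommGroup Z₂] (tp₂ : P → Z₁ → Z₂),
        IsBalancedTensor S P Z₁ Z₂ tp₂ →
        ∀ (η : Z₂ →+ V), (∀ (p : P) (q : Q) (v : V), η (tp₂ p (tp₁ q v)) = bT p q • v) →
          Function.Injective η := by
  intro V _ _ Z₁ _ _ tp₁ ht₁ hsmul Z₂ _ tp₂ ht₂ η hη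
  -- `α_{Z₁}` factors as `η` followed by `v ↦ (q ↦ q ⊗ v)`.
  let ι : V →+ (Q → Z₁) := AddMonoidHom.pi fun q => AddMonoidHom.mk' (tp₁ q) (ht₁.add_right q)
  let α : Z₂ →+ (Q → Z₁) := ι.comp η
  have hα : ∀ p z q, α (tp₂ p z) q = bS q p • z := fun p z q =>
    ht₁.tp_apply_eq_pairing_smul hsmul hcomp1
      (f := η.comp (AddMonoidHom.mk' (tp₂ p) (ht₂.add_right p))) (hη p) q z
  exact Function.Injective.of_comp (f := ι) (halpha Z₁ Z₂ tp₂ ht₂ α hα)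
end

section
/- Let M = (T,S,P,Q,<,>_T,<,>_S) be an injective unital Morita context (both <,>_T and <,>_S are injective), with trace ideals I = Im(<,>_T), J = Im(<,>_S). Then for every left T-module V satisfying Q ⊗_T V ≅ Hom_T(P,V) via the canonical map α_V (V ∈ D_l), the counit ω_{P,V} : P ⊗_S Hom_T(P,V) → V is an isomorphism if and only if the multiplication map ξ_{I,V} : I ⊗_T V → V is an isomorphism. -/
/-!
Identifying `I` with `P ⊗_S Q` through `⟨,⟩_T`, the source of `ξ_{I,V}` is `(P ⊗_S Q) ⊗_T V`,
which by associativity is `P ⊗_S (Q ⊗_T V)`, and hence `P ⊗_S Hom_T(P,V)` through `id_P ⊗ α_V`.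
This isomorphism carries `ξ_{I,V}` to `ω_{P,V}`, as both send `p ⊗ q ⊗ v` to `⟨p,q⟩_T v`.
-/

open MulOpposite

structure IsBalancedTrilinear (S T : Type) [Ring S] [Ring T]
    (P : Type) [AddCommGroup P] [Module Sᵐᵒᵖ P]
    (Q : Type) [AddCommGroup Q] [Module S Q] [Module Tᵐᵒᵖ Q]
    (V : Type) [AddCommGroup V] [Module T V]
    {Y : Type} [AddCommGroup Y] (f : P → Q → V → Y) : Prop where
  add_left : ∀ p p' q v, f (p + p') q v = f p q v + f p' q v
  add_mid : ∀ p q q' v, f p (q + q') v = f p q v + f p q' v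
  add_right : ∀ p q v v', f p q (v + v') = f p q v + f p q v'
  balanced_left : ∀ p (s : S) q v, f (op s • p) q v = f p (s • q) v
  balanced_right : ∀ p q (t : T) v, f p (op t • q) v = f p q (t • v)

namespace IsBalancedTensor

section Basic

variable {R : Type} [Ring R] {M : Type} [AddCommGroup M] [Module Rᵐᵒᵖ M]
  {N : Type} [AddCommGroup N] [Module R N] {W : Type} [AddCommGroup W] {tp : M → N → W}

theorem ext_hom (h : IsBalancedTensor R M N W tp) {Y : Type} [AddCommGroup Y]
    {g g' : W →+ Y} (hgg : ∀ m n, g (tp m n) = g' (tp m n)) : g = g' := by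
  obtain ⟨_, -, huniq⟩ := h.lift Y (fun m n => g (tp m n))
    (fun m m' n => by rw [h.add_left, map_add])
    (fun m n n' => by rw [h.add_right, map_add])
    (fun m r n => by rw [h.balanced])
  exact (huniq g fun _ _ => rfl).trans (huniq g' fun m n => (hgg m n).symm).symm

theorem comp_addEquiv (h : IsBalancedTensor R M N W tp) {W' : Type} [AddCommGroup W'] (e : W ≃+ W') :
    IsBalancedTensor R M N W' (fun m n => e (tp m n)) where
  add_left m m' n := by rw [h.add_left, map_add]
  add_right m n n' := by rw [h.add_right, map_add]
  balanced m r n := by rw [h.balanced]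
  lift Y _ f h₁ h₂ h₃ := by
    obtain ⟨g, hg, huniq⟩ := h.lift Y f h₁ h₂ h₃
    refine ⟨g.comp e.symm.toAddMonoidHom, fun m n => by simp [hg], fun g' hg' => ?_⟩
    have : g'.comp e.toAddMonoidHom = g := huniq _ hg'
    rw [← this]
    ext w
    simp

end Basic

theorem ext_hom_left {R R' M N X V Z Y : Type} [Ring R] [Ring R'] [AddCommGroup M]
    [Module Rᵐᵒᵖ M] [AddCommGroup N] [Module R N] [AddCommGroup X] [Module R'ᵐᵒᵖ X]
    [AddCommGroup V] [Module R' V] [AddCommGroup Z] [AddCommGroup Y] {tpX : M → N → X}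
    {tp : X → V → Z} (hX : IsBalancedTensor R M N X tpX) (hZ : IsBalancedTensor R' X V Z tp)
    {g g' : Z →+ Y} (hgg : ∀ m n v, g (tp (tpX m n) v) = g' (tp (tpX m n) v)) :
    g = g' := by
  refine hZ.ext_hom fun x v => ?_
  let restrict (g : Z →+ Y) : X →+ Y :=
    AddMonoidHom.mk' (fun x => g (tp x v)) fun x x' => by rw [hZ.add_left, map_add]
  exact DFunLike.congr_fun (hX.ext_hom (g := restrict g) (g' := restrict g') (hgg · · v)) x

theorem ext_hom_right {R R' M N V H Z Y : Type} [Ring R] [Ring R'] [AddCommGroup M]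
    [Module Rᵐᵒᵖ M] [AddCommGroup N] [Module R'ᵐᵒᵖ N] [AddCommGroup V] [Module R' V]
    [AddCommGroup H] [Module R H] [AddCommGroup Z] [AddCommGroup Y] {tpH : N → V → H}
    {tp : M → H → Z} (hH : IsBalancedTensor R' N V H tpH) (hZ : IsBalancedTensor R M H Z tp)
    {g g' : Z →+ Y} (hgg : ∀ m n v, g (tp m (tpH n v)) = g' (tp m (tpH n v))) :
    g = g' := by
  refine hZ.ext_hom fun m h => ?_
  let restrict (g : Z →+ Y) : H →+ Y :=
    AddMonoidHom.mk' (fun h => g (tp m h)) fun h h' => by rw [hZ.add_right, map_add]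
  exact DFunLike.congr_fun (hH.ext_hom (g := restrict g) (g' := restrict g') (hgg m)) h

section Assoc

/- `X = P ⊗[S] Q` with its right `T`-action through `Q`, `H = Q ⊗[T] V` with its left
`S`-action through `Q`, and the two bracketings `Z₃ = X ⊗[T] V`, `Z₂ = P ⊗[S] H`. -/
variable {S T : Type} [Ring S] [Ring T]
  {P : Type} [AddCommGroup P] [Module Sᵐᵒᵖ P]
  {Q : Type} [AddCommGroup Q] [Module S Q] [Module Tᵐᵒᵖ Q]
  {V : Type} [AddCommGroup V] [Module T V]
  {X : Type} [AddCommGroup X] [Module Tᵐᵒᵖ X] {tpX : P → Q → X}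
  {H : Type} [AddCommGroup H] [Module S H] {tpH : Q → V → H}
  {Z₃ : Type} [AddCommGroup Z₃] {tp₃ : X → V → Z₃}
  {Z₂ : Type} [AddCommGroup Z₂] {tp₂ : P → H → Z₂}
  {Y : Type} [AddCommGroup Y]

theorem exists_lift_left (hX : IsBalancedTensor S P Q X tpX)
    (hXr : ∀ (t : T) p q, op t • tpX p q = tpX p (op t • q))
    (hZ₃ : IsBalancedTensor T X V Z₃ tp₃) {f : P → Q → V → Y}
    (hf : IsBalancedTrilinear S T P Q V f) :
    ∃ g : Z₃ →+ Y, ∀ p q v, g (tp₃ (tpX p q) v) = f p q v := by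
  choose g hg using fun v => (hX.lift Y (fun p q => f p q v) (hf.add_left · · · v)
    (hf.add_mid · · · v) (hf.balanced_left · · · v)).exists
  have hg_add (v v') : g (v + v') = g v + g v' :=
    hX.ext_hom fun p q => by simp only [hg, AddMonoidHom.add_apply, hf.add_right]
  have hg_smul (t : T) (v) : (g v).comp (DistribSMul.toAddMonoidHom X (op t)) = g (t • v) :=
    hX.ext_hom fun p q => by
      simp only [AddMonoidHom.comp_apply, DistribSMul.toAddMonoidHom_apply, hXr, hg,
        hf.balanced_right]
  obtain ⟨G, hG, -⟩ := hZ₃.lift Y (fun x v => g v x) (fun x x' v => map_add _ _ _)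
    (fun x v v' => by rw [hg_add]; rfl)
    (fun x t v => DFunLike.congr_fun (hg_smul t v) x)
  exact ⟨G, fun p q v => by rw [hG, hg]⟩

theorem exists_lift_right (hH : IsBalancedTensor T Q V H tpH)
    (hHl : ∀ (s : S) q v, tpH (s • q) v = s • tpH q v)
    (hZ₂ : IsBalancedTensor S P H Z₂ tp₂) {f : P → Q → V → Y}
    (hf : IsBalancedTrilinear S T P Q V f) :
    ∃ g : Z₂ →+ Y, ∀ p q v, g (tp₂ p (tpH q v)) = f p q v := by
  choose g hg using fun p => (hH.lift Y (fun q v => f p q v) (hf.add_mid p)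
    (hf.add_right p) (hf.balanced_right p)).exists
  have hg_add (p p') : g (p + p') = g p + g p' :=
    hH.ext_hom fun q v => by simp only [hg, AddMonoidHom.add_apply, hf.add_left]
  have hg_smul (s : S) (p) : g (op s • p) = (g p).comp (DistribSMul.toAddMonoidHom H s) :=
    hH.ext_hom fun q v => by
      simp only [AddMonoidHom.comp_apply, DistribSMul.toAddMonoidHom_apply, ← hHl, hg,
        hf.balanced_left]
  obtain ⟨G, hG, -⟩ := hZ₂.lift Y (fun p h => g p h) (fun p p' h => by rw [hg_add]; rfl)
    (fun p h h' => map_add _ _ _)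
    (fun p s h => DFunLike.congr_fun (hg_smul s p) h)
  exact ⟨G, fun p q v => by rw [hG, hg]⟩

theorem exists_addEquiv_assoc (hX : IsBalancedTensor S P Q X tpX)
    (hXr : ∀ (t : T) p q, op t • tpX p q = tpX p (op t • q))
    (hH : IsBalancedTensor T Q V H tpH) (hHl : ∀ (s : S) q v, tpH (s • q) v = s • tpH q v)
    (hZ₃ : IsBalancedTensor T X V Z₃ tp₃) (hZ₂ : IsBalancedTensor S P H Z₂ tp₂) :
    ∃ φ : Z₃ ≃+ Z₂, ∀ p q v, φ (tp₃ (tpX p q) v) = tp₂ p (tpH q v) := by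
  obtain ⟨φ, hφ⟩ := exists_lift_left hX hXr hZ₃ (f := fun p q v => tp₂ p (tpH q v))
    { add_left := fun p p' q v => hZ₂.add_left p p' _
      add_mid := fun p q q' v => by rw [hH.add_left, hZ₂.add_right]
      add_right := fun p q v v' => by rw [hH.add_right, hZ₂.add_right]
      balanced_left := fun p s q v => by rw [hZ₂.balanced, hHl]
      balanced_right := fun p q t v => by rw [hH.balanced] }
  obtain ⟨ψ, hψ⟩ := exists_lift_right hH hHl hZ₂ (f := fun p q v => tp₃ (tpX p q) v)
    { add_left := fun p p' q v => by rw [hX.add_left, hZ₃.add_left]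
      add_mid := fun p q q' v => by rw [hX.add_right, hZ₃.add_left]
      add_right := fun p q v v' => hZ₃.add_right _ v v'
      balanced_left := fun p s q v => by rw [hX.balanced]
      balanced_right := fun p q t v => by rw [← hXr, hZ₃.balanced] }
  refine ⟨AddMonoidHom.toAddEquiv φ ψ ?_ ?_, hφ⟩
  · exact ext_hom_left hX hZ₃ fun p q v => by simp [hφ, hψ]
  · exact ext_hom_right hH hZ₂ fun p q v => by simp [hφ, hψ]

end Assoc

end IsBalancedTensor

variable (T S P Q : Type) [Ring T] [Ring S]
  [AddCommGroup P] [Module T P] [Module Sᵐᵒᵖ P] [SMulCommClass T Sᵐᵒᵖ P]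
  [AddCommGroup Q] [Module S Q] [Module Tᵐᵒᵖ Q] [SMulCommClass S Tᵐᵒᵖ Q]

/-- `X` realizes `P ⊗_S Q` and `βT` the pairing `⟨,⟩_T`, so that, `βT` being injective,
`Z₃ = X ⊗_T V` with `ξ (x ⊗ v) = βT x • v` presents `ξ_{I,V} : I ⊗_T V → V`. -/
theorem stmt_18 (bT : P → Q → T) (hbT : IsPairing T S P Q bT)
    (X : Type) [AddCommGroup X] [Module Tᵐᵒᵖ X] (tpX : P → Q → X)
    (hX : IsBalancedTensor S P Q X tpX)
    (hXr : ∀ (t : T) (p : P) (q : Q), op t • tpX p q = tpX p (op t • q))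
    (βT : X →+ T) (hβT : ∀ p q, βT (tpX p q) = bT p q)
    (V : Type) [AddCommGroup V] [Module T V]
    (Z₁ : Type) [AddCommGroup Z₁] (tp₁ : Q → V → Z₁)
    (hZ₁ : IsBalancedTensor T Q V Z₁ tp₁)
    (αV : Z₁ →+ (P →ₗ[T] V))
    (hαV : ∀ (q : Q) (v : V) (p : P), αV (tp₁ q v) p = bT p q • v)
    (hDl : Function.Bijective αV)
    (Z₂ : Type) [AddCommGroup Z₂] (tp₂ : P → (P →ₗ[T] V) → Z₂)
    (hZ₂ : IsBalancedTensor S P (P →ₗ[T] V) Z₂ tp₂)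
    (ω : Z₂ →+ V) (hω : ∀ (p : P) (f : P →ₗ[T] V), ω (tp₂ p f) = f p)
    (Z₃ : Type) [AddCommGroup Z₃] (tp₃ : X → V → Z₃)
    (hZ₃ : IsBalancedTensor T X V Z₃ tp₃)
    (ξ : Z₃ →+ V) (hξ : ∀ (x : X) (v : V), ξ (tp₃ x v) = βT x • v) :
    Function.Bijective ω ↔ Function.Bijective ξ := by
  have hαV_smul (s : S) (q : Q) (v : V) : αV (tp₁ (s • q) v) = s • αV (tp₁ q v) :=
    LinearMap.ext fun p => by
      change _ = αV (tp₁ q v) (op s • p)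
      rw [hαV, hαV, hbT.balanced]
  obtain ⟨φ, hφ⟩ := IsBalancedTensor.exists_addEquiv_assoc hX hXr
    (hZ₁.comp_addEquiv (AddEquiv.ofBijective αV hDl)) hαV_smul hZ₃ hZ₂
  have hωφ : ω.comp φ.toAddMonoidHom = ξ :=
    IsBalancedTensor.ext_hom_left hX hZ₃ fun p q v => by
      simp [hφ, hω, hαV, hξ, hβT]
  rw [← hωφ, AddMonoidHom.coe_comp]
  exact (Function.Bijective.of_comp_iff _ φ.bijective).symm
end

section
/- Let M = (T,S,P,Q,<,>_T,<,>_S) be an injective unital Morita context with trace ideal I = Im(<,>_T). Then for every left T-module V satisfying Q ⊗_T V ≅ Hom_T(P,V) via the canonical map α_V, the unit η_{P,V} : V → Hom_S(Q, Q ⊗_T V) is an isomorphism if and only if the canonical map ζ_{I,V} : V → Hom_T(I,V), v ↦ (i ↦ iv), is an isomorphism. -/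
/-!
Composing `α_V` with the tensor-hom adjunction gives a bijection
`Φ : Hom_S(Q, Q ⊗_T V) ≃ Hom_S(Q, Hom_T(P, V)) ≃ Hom_T(P ⊗_S Q, V)`; this needs `α_V` to be
`S`-equivariant, which holds because `⟨,⟩_T` is `S`-balanced. On pure tensors
`Φ (η v) (p ⊗ q) = ⟨p, q⟩_T • v = ζ v (p ⊗ q)`, so `ζ = Φ ∘ η` and `η` is bijective iff `ζ` is.
-/

open MulOpposite

namespace IsBalancedTensor

variable {S : Type} [Ring S] {P : Type} [AddCommGroup P] [Module Sᵐᵒᵖ P]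
  {Q : Type} [AddCommGroup Q] [Module S Q] {X : Type} [AddCommGroup X] {tp : P → Q → X}

lemma addHom_ext_s19 (hX : IsBalancedTensor S P Q X tp) {Y : Type} [AddCommGroup Y]
    (g h : X →+ Y) (H : ∀ p q, g (tp p q) = h (tp p q)) : g = h := by
  obtain ⟨k, -, hu⟩ := hX.lift Y (fun p q => g (tp p q))
    (fun p p' q => by simp only [hX.add_left, map_add])
    (fun p q q' => by simp only [hX.add_right, map_add])
    (fun p s q => by simp only [hX.balanced])
  rw [hu g fun p q => rfl, hu h fun p q => (H p q).symm]

variable {T : Type} [Ring T] [Module T X] {V : Type} [AddCommGroup V] [Module T V]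

lemma linearMap_ext (hX : IsBalancedTensor S P Q X tp) {g h : X →ₗ[T] V}
    (H : ∀ p q, g (tp p q) = h (tp p q)) : g = h :=
  LinearMap.toAddMonoidHom_injective (hX.addHom_ext_s19 _ _ H)

variable [Module T P]

lemma exists_linearMap_lift (hX : IsBalancedTensor S P Q X tp)
    (hXl : ∀ (t : T) p q, t • tp p q = tp (t • p) q) (f : P → Q → V)
    (add_left : ∀ p p' q, f (p + p') q = f p q + f p' q)
    (add_right : ∀ p q q', f p (q + q') = f p q + f p q')
    (balanced : ∀ p (s : S) q, f (op s • p) q = f p (s • q))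
    (smul_left : ∀ (t : T) p q, f (t • p) q = t • f p q) :
    ∃ g : X →ₗ[T] V, ∀ p q, g (tp p q) = f p q := by
  obtain ⟨g, hg, -⟩ := hX.lift V f add_left add_right balanced
  have map_smul (t : T) : g.comp (DistribSMul.toAddMonoidHom X t) =
      (DistribSMul.toAddMonoidHom V t).comp g :=
    hX.addHom_ext_s19 _ _ fun p q => by simp [hXl, hg, smul_left]
  exact ⟨{ g with map_smul' := fun t x => DFunLike.congr_fun (map_smul t) x }, hg⟩

theorem exists_equiv_linearMap (hX : IsBalancedTensor S P Q X tp)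
    (hXl : ∀ (t : T) p q, t • tp p q = tp (t • p) q)
    {Z : Type} [AddCommGroup Z] [Module S Z] (α : Z →+ (P →ₗ[T] V))
    (hα : Function.Bijective α) (hαS : ∀ (s : S) z p, α (s • z) p = α z (op s • p)) :
    ∃ Φ : (Q →ₗ[S] Z) ≃ (X →ₗ[T] V), ∀ f p q, Φ f (tp p q) = α (f q) p := by
  choose Φ hΦ using fun f : Q →ₗ[S] Z => hX.exists_linearMap_lift hXl (fun p q => α (f q) p)
    (fun p p' q => map_add _ p p') (fun p q q' => by simp only [map_add, LinearMap.add_apply])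
    (fun p s q => by rw [← hαS, f.map_smul]) (fun t p q => map_smul _ t p)
  have injective : Function.Injective Φ := fun f g hfg =>
    LinearMap.ext fun q => hα.1 <| LinearMap.ext fun p => by rw [← hΦ, ← hΦ, hfg]
  have surjective : Function.Surjective Φ := by
    intro h
    let e := AddEquiv.ofBijective α hα
    let L : Q → (P →ₗ[T] V) := fun q =>
      { toFun := fun p => h (tp p q)
        map_add' := fun p p' => by rw [hX.add_left, map_add]
        map_smul' := fun t p => by rw [← hXl, map_smul]; rfl }
    have hL (q : Q) : α (e.symm (L q)) = L q := e.apply_symm_apply (L q)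
    let F : Q →ₗ[S] Z :=
      { toFun := fun q => e.symm (L q)
        map_add' := fun q q' => e.injective <| LinearMap.ext fun p => by
          simp [L, hX.add_right]
        map_smul' := fun s q => e.injective <| LinearMap.ext fun p => by
          simp only [AddEquiv.apply_symm_apply, RingHom.id_apply]
          show L (s • q) p = α (s • e.symm (L q)) p
          rw [hαS, hL]
          exact congrArg h (hX.balanced p s q).symm }
    exact ⟨F, hX.linearMap_ext fun p q => by rw [hΦ]; exact DFunLike.congr_fun (hL q) p⟩
  exact ⟨Equiv.ofBijective Φ ⟨injective, surjective⟩, hΦ⟩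

end IsBalancedTensor

lemma IsBalancedTensor.map_smul_apply_eq_apply_op_smul {T S P Q V Z : Type} [Ring T] [Ring S]
    [AddCommGroup P] [Module T P] [Module Sᵐᵒᵖ P]
    [AddCommGroup Q] [Module S Q] [Module Tᵐᵒᵖ Q] [AddCommGroup V] [Module T V]
    [AddCommGroup Z] [Module S Z] {tp : Q → V → Z} (hZ : IsBalancedTensor T Q V Z tp)
    (hS : ∀ (s : S) q v, s • tp q v = tp (s • q) v) {b : P → Q → T}
    (hb : ∀ p (s : S) q, b (op s • p) q = b p (s • q)) (α : Z →+ (P →ₗ[T] V))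
    (hα : ∀ q v p, α (tp q v) p = b p q • v) (s : S) (z : Z) (p : P) :
    α (s • z) p = α z (op s • p) := by
  have key := hZ.addHom_ext_s19
    (AddMonoidHom.mk' (fun z => α (s • z) p) fun z z' => by simp only [smul_add, map_add,
      LinearMap.add_apply])
    (AddMonoidHom.mk' (fun z => α z (op s • p)) fun z z' => by simp only [map_add,
      LinearMap.add_apply])
    fun q v => by simp only [AddMonoidHom.mk'_apply, hS, hα, hb]
  exact DFunLike.congr_fun key z

variable (T S P Q : Type) [Ring T] [Ring S]
  [AddCommGroup P] [Module T P] [Module Sᵐᵒᵖ P] [SMulCommClass T Sᵐᵒᵖ P]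
  [AddCommGroup Q] [Module S Q] [Module Tᵐᵒᵖ Q] [SMulCommClass S Tᵐᵒᵖ Q]

/-- `X` realizes `P ⊗_S Q` and `βT` realizes `⟨,⟩_T`; `Hom_T(I,V)` is presented, via
`⟨,⟩_T : P ⊗_S Q ≅ I`, as `Hom_T(X,V)`, so that `ζ v = (x ↦ βT x • v)`. -/
theorem stmt_19 (bT : P → Q → T) (hbT : IsPairing T S P Q bT)
    (X : Type) [AddCommGroup X] [Module T X] (tpX : P → Q → X)
    (hX : IsBalancedTensor S P Q X tpX)
    (hXl : ∀ (t : T) (p : P) (q : Q), t • tpX p q = tpX (t • p) q)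
    (βT : X →+ T) (hβT : ∀ p q, βT (tpX p q) = bT p q)
    (V : Type) [AddCommGroup V] [Module T V]
    (Z₁ : Type) [AddCommGroup Z₁] [Module S Z₁] (tp₁ : Q → V → Z₁)
    (hZ₁ : IsBalancedTensor T Q V Z₁ tp₁)
    (hS₁ : ∀ (s : S) (q : Q) (v : V), s • tp₁ q v = tp₁ (s • q) v)
    (αV : Z₁ →+ (P →ₗ[T] V))
    (hαV : ∀ (q : Q) (v : V) (p : P), αV (tp₁ q v) p = bT p q • v)
    (hDl : Function.Bijective αV)
    (η : V → (Q →ₗ[S] Z₁)) (hη : ∀ (v : V) (q : Q), η v q = tp₁ q v)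
    (ζ : V → (X →ₗ[T] V)) (hζ : ∀ (v : V) (x : X), ζ v x = βT x • v) :
    Function.Bijective η ↔ Function.Bijective ζ := by
  obtain ⟨Φ, hΦ⟩ := hX.exists_equiv_linearMap hXl αV hDl
    (hZ₁.map_smul_apply_eq_apply_op_smul hS₁ hbT.balanced αV hαV)
  have hζΦ : ζ = Φ ∘ η := funext fun v => hX.linearMap_ext fun p q => by
    rw [hζ, hβT, Function.comp_apply, hΦ, hη, hαV]
  rw [hζΦ, Equiv.comp_bijective]
end
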